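/- arXiv:2305.10292 — 2 statements merged into one kernel-verified Lean document; each statement's English description precedes it below -/
import Mathlib

section
/- At the end of the main loop of algorithm LA, the constructed sets X and Y are disjoint and satisfy f(O1) ≤ 3 (f(X) + f(Y)), where O1 is an optimal solution of the knapsack-constrained maximization problem restricted to the ground set V1 = {e ∈ V : c(e) ≤ B/2}, i.e., f(O1) = max{f(S) : S ⊆ V1, c(S) ≤ B}. -/
open scoped BigOperators Classical

/-- The cost of a set is the (modular) sum of the costs of its elements. -/
noncomputable def cost {α : Type*} (c : α → ℝ) (S : Finset α) : ℝ := ∑ e ∈ S, c e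

/-- Marginal gain `f(e|S) = f(S ∪ {e}) − f(S)`. -/
noncomputable def marg {α : Type*} [DecidableEq α] (f : Finset α → ℝ) (e : α)
    (S : Finset α) : ℝ := f (insert e S) - f S

/-- One step of the main loop of algorithm `LA`: among the sets `Z ∈ {X, Y}` with
`f(e|Z)/c(e) ≥ f(Z)/B` (if any), the element `e` is added to one maximizing
`f(e|Z)/c(e)` (ties broken towards `X`).  Sets are maintained as lists in order of
insertion (oldest first). -/
noncomputable def laStep {α : Type*} [DecidableEq α] (f : Finset α → ℝ) (c : α → ℝ)
    (B : ℝ) (st : List α × List α) (e : α) : List α × List α :=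
  let gX := marg f e st.1.toFinset / c e
  let gY := marg f e st.2.toFinset / c e
  let okX := f st.1.toFinset / B ≤ gX
  let okY := f st.2.toFinset / B ≤ gY
  if okX ∧ (gY ≤ gX ∨ ¬ okY) then (st.1 ++ [e], st.2)
  else if okY then (st.1, st.2 ++ [e])
  else st

/-- The main loop of algorithm `LA`: starting from `X = Y = ∅`, scan the elements of the
input list (an enumeration of `V1 = {e ∈ V : c(e) ≤ B/2}` in a fixed order) once. -/
noncomputable def laRun {α : Type*} [DecidableEq α] (f : Finset α → ℝ) (c : α → ℝ)
    (B : ℝ) (l : List α) : List α × List α :=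
  l.foldl (laStep f c B) ([], [])

/-!
When an element `e` is scanned, either it is rejected by `X`, so `f(e|X) < c(e) f(X)/B`,
or it joins `Y`, so `f(e|X) ≤ f(e|Y) + c(e) f(X)/B`, or it joins `X` with `f(e|X) ≥ 0`. By
submodularity the gain of `e` on top of `Q ∪ X` is at most `f(e|X)`, so the set `Q` of
already scanned elements of `O1` keeps satisfying `f(Q ∪ X) ≤ (1 + c(Q \ X)/B) f(X) + f(Y)`;
at the end `c(O1) ≤ B` turns this into `f(O1 ∪ X) ≤ 2 f(X) + f(Y)`, and symmetrically for `Y`.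
As `X` and `Y` are disjoint, submodularity and nonnegativity give
`f(O1) ≤ f(O1 ∪ X) + f(O1 ∪ Y)`.
-/

open Finset

theorem Finset.forall_subset_insert {α : Type*} [DecidableEq α] {p : Finset α → Prop}
    {P : Finset α} {e : α} (h : ∀ Q ⊆ P, e ∉ Q → p Q ∧ p (insert e Q)) :
    ∀ Q ⊆ insert e P, p Q := by
  intro Q hQ
  by_cases heQ : e ∈ Q
  · rw [← insert_erase heQ]
    exact (h _ (subset_insert_iff.mp hQ) (notMem_erase e Q)).2
  · exact (h Q ((subset_insert_iff_of_notMem heQ).mp hQ) heQ).1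

def SubmodularOn {α : Type*} [DecidableEq α] (V : Finset α) (f : Finset α → ℝ) : Prop :=
  ∀ A B' : Finset α, A ⊆ B' → B' ⊆ V → ∀ e ∈ V, e ∉ B' →
    marg f e B' ≤ marg f e A

namespace SubmodularOn

variable {α : Type*} [DecidableEq α] {V : Finset α} {f : Finset α → ℝ}

theorem marg_union_le (hf : SubmodularOn V f) {Q X : Finset α} {e : α} (hQV : Q ⊆ V)
    (hXV : X ⊆ V) (heV : e ∈ V) (heQ : e ∉ Q) (heX : e ∉ X) :
    marg f e (Q ∪ X) ≤ marg f e X :=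
  hf X (Q ∪ X) subset_union_right (union_subset hQV hXV) e heV (by simp [heQ, heX])

theorem union_sub_le_union_sub (hf : SubmodularOn V f) {A B' S : Finset α} (hAB : A ⊆ B')
    (hB'V : B' ⊆ V) (hSV : S ⊆ V) (hSB' : Disjoint S B') :
    f (S ∪ B') - f B' ≤ f (S ∪ A) - f A := by
  induction S using Finset.induction_on with
  | empty => simp
  | insert e S heS ih =>
    rw [insert_subset_iff] at hSV
    rw [disjoint_insert_left] at hSB'
    have hgain := hf (S ∪ A) (S ∪ B') (union_subset_union_right hAB)
      (union_subset hSV.2 hB'V) e hSV.1 (by simp [heS, hSB'.1])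
    simp only [marg, insert_union] at hgain ⊢
    linarith [ih hSV.2 hSB'.2]

theorem union_add_inter_le (hf : SubmodularOn V f) {S T : Finset α} (hSV : S ⊆ V)
    (hTV : T ⊆ V) : f (S ∪ T) + f (T ∩ S) ≤ f S + f T := by
  have h := hf.union_sub_le_union_sub (inter_subset_right : T ∩ S ⊆ S) hSV
    (sdiff_subset.trans hTV) sdiff_disjoint
  rw [sdiff_union_self_eq_union, sdiff_union_inter, union_comm] at h
  linarith

theorem le_union_add_union (hf : SubmodularOn V f) (hnonneg : ∀ S ⊆ V, 0 ≤ f S)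
    {O X Y : Finset α} (hOV : O ⊆ V) (hXV : X ⊆ V) (hYV : Y ⊆ V) (hXY : Disjoint X Y) :
    f O ≤ f (O ∪ X) + f (O ∪ Y) := by
  have h := hf.union_add_inter_le (union_subset hOV hXV) (union_subset hOV hYV)
  rw [← union_inter_distrib_left, disjoint_iff_inter_eq_empty.mp hXY.symm, union_empty] at h
  linarith [hnonneg _ (union_subset (union_subset hOV hXV) (union_subset hOV hYV))]

end SubmodularOn

section UnionBound

variable {α : Type*} [DecidableEq α] (f : Finset α → ℝ) (c : α → ℝ) (B : ℝ)

/-- `f(Q ∪ X) ≤ (1 + c(Q \ X)/B) f(X) + f(Y)`, multiplied by `B`. -/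
def UnionBound (Q X Y : Finset α) : Prop :=
  B * f (Q ∪ X) ≤ (B + cost c (Q \ X)) * f X + B * f Y

variable {f c B} {V Q X Y Y' : Finset α} {e : α}

theorem UnionBound.grow (h : UnionBound f c B Q X Y) (hB : 0 ≤ B) (hf : SubmodularOn V f)
    (hc : ∀ a ∈ Q, 0 ≤ c a) (hQV : Q ⊆ V) (hXV : X ⊆ V) (heV : e ∈ V) (heQ : e ∉ Q)
    (heX : e ∉ X) (hm : 0 ≤ marg f e X) :
    UnionBound f c B Q (insert e X) Y ∧ UnionBound f c B (insert e Q) (insert e X) Y := by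
  have hgain := hf.marg_union_le hQV hXV heV heQ heX
  have hk : 0 ≤ cost c (Q \ X) := sum_nonneg fun a ha => hc a (sdiff_subset ha)
  have hQX : UnionBound f c B Q (insert e X) Y := by
    unfold UnionBound marg at *
    rw [union_insert, sdiff_insert_of_notMem heQ]
    nlinarith [mul_nonneg hk hm, mul_le_mul_of_nonneg_left hgain hB]
  refine ⟨hQX, ?_⟩
  unfold UnionBound at *
  rwa [insert_sdiff_insert, insert_union, union_insert, insert_idem, ← union_insert]

theorem UnionBound.grow_right (h : UnionBound f c B Q X Y) (hB : 0 ≤ B)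
    (hf : SubmodularOn V f) (hQV : Q ⊆ V) (hXV : X ⊆ V) (heV : e ∈ V) (heQ : e ∉ Q)
    (heX : e ∉ X) (hY : f Y ≤ f Y')
    (hm : B * marg f e X ≤ B * (f Y' - f Y) + c e * f X) :
    UnionBound f c B Q X Y' ∧ UnionBound f c B (insert e Q) X Y' := by
  have hgain := hf.marg_union_le hQV hXV heV heQ heX
  unfold UnionBound marg cost at *
  rw [insert_union, insert_sdiff_of_notMem _ heX, sum_insert (by simp [heQ])]
  constructor <;> nlinarith [mul_le_mul_of_nonneg_left hgain hB, mul_le_mul_of_nonneg_left hY hB]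

theorem UnionBound.le_two_mul_add (h : UnionBound f c B Q X Y) (hB : 0 < B) (hX : 0 ≤ f X)
    (hk : cost c (Q \ X) ≤ B) : f (Q ∪ X) ≤ 2 * f X + f Y := by
  refine le_of_mul_le_mul_left ?_ hB
  unfold UnionBound at h
  nlinarith [mul_le_mul_of_nonneg_right hk hX]

end UnionBound

section LAInvariant

variable {α : Type*} [DecidableEq α] {f : Finset α → ℝ} {c : α → ℝ} {B : ℝ}

theorem marg_nonneg_of_threshold {Z : Finset α} {e : α} (hB : 0 < B) (hce : 0 < c e)
    (hZ : 0 ≤ f Z) (h : f Z / B ≤ marg f e Z / c e) : 0 ≤ marg f e Z := by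
  simpa [hce.ne'] using mul_nonneg ((div_nonneg hZ hB.le).trans h) hce.le

theorem mul_marg_le_of_not_threshold {Z : Finset α} {e : α} (hB : 0 < B) (hce : 0 < c e)
    (h : ¬ f Z / B ≤ marg f e Z / c e) : B * marg f e Z ≤ c e * f Z := by
  rw [not_le, div_lt_div_iff₀ hce hB] at h
  linarith

theorem mul_marg_le_of_preferred {Z W : Finset α} {e : α} (hB : 0 < B) (hce : 0 < c e)
    (hZ : 0 ≤ f Z) (hW : 0 ≤ f W) (hokZ : f Z / B ≤ marg f e Z / c e)
    (hpref : marg f e W / c e ≤ marg f e Z / c e ∨ ¬ f W / B ≤ marg f e W / c e) :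
    B * marg f e W ≤ B * marg f e Z + c e * f W := by
  have hmZ := marg_nonneg_of_threshold hB hce hZ hokZ
  rcases hpref with hle | hnokW
  · have := mul_le_mul_of_nonneg_left ((div_le_div_iff_of_pos_right hce).mp hle) hB.le
    nlinarith [mul_nonneg hce.le hW]
  · nlinarith [mul_marg_le_of_not_threshold hB hce hnokW, mul_nonneg hB.le hmZ]

variable (f c B)

/-- The invariant of the main loop of `LA` once the elements of `P` have been scanned, with
state `(X, Y)`; the bounds are kept for every `Q ⊆ P`, which at the end includes `O1`. -/
structure LAInvariant (P X Y : Finset α) : Prop where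
  left_subset : X ⊆ P
  right_subset : Y ⊆ P
  disjoint : Disjoint X Y
  left_bound : ∀ Q ⊆ P, UnionBound f c B Q X Y
  right_bound : ∀ Q ⊆ P, UnionBound f c B Q Y X

variable {f c B} {V P X Y : Finset α} {e : α}

theorem LAInvariant.symm (h : LAInvariant f c B P X Y) : LAInvariant f c B P Y X :=
  ⟨h.right_subset, h.left_subset, h.disjoint.symm, h.right_bound, h.left_bound⟩

theorem LAInvariant.empty (hf : f ∅ = 0) : LAInvariant f c B ∅ ∅ ∅ := by
  have hbound : ∀ Q ⊆ (∅ : Finset α), UnionBound f c B Q ∅ ∅ := by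
    intro Q hQ
    simp [subset_empty.mp hQ, UnionBound, hf]
  exact ⟨subset_rfl, subset_rfl, disjoint_empty_left _, hbound, hbound⟩

theorem LAInvariant.insert_left (h : LAInvariant f c B P X Y) (hB : 0 ≤ B)
    (hf : SubmodularOn V f) (hc : ∀ a ∈ V, 0 ≤ c a) (hPV : P ⊆ V) (heV : e ∈ V)
    (heP : e ∉ P) (hmX : 0 ≤ marg f e X) (hmY : B * marg f e Y ≤ B * marg f e X + c e * f Y) :
    LAInvariant f c B (insert e P) (insert e X) Y where
  left_subset := insert_subset_insert e h.left_subset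
  right_subset := h.right_subset.trans (subset_insert e P)
  disjoint := disjoint_insert_left.2 ⟨fun he => heP (h.right_subset he), h.disjoint⟩
  left_bound := forall_subset_insert fun Q hQ heQ =>
    (h.left_bound Q hQ).grow hB hf (fun a ha => hc a (hPV (hQ ha))) (hQ.trans hPV)
      (h.left_subset.trans hPV) heV heQ (fun he => heP (h.left_subset he)) hmX
  right_bound := forall_subset_insert fun Q hQ heQ =>
    (h.right_bound Q hQ).grow_right hB hf (hQ.trans hPV) (h.right_subset.trans hPV) heV heQ
      (fun he => heP (h.right_subset he)) (by unfold marg at hmX; linarith)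
      (by unfold marg at hmY ⊢; linarith)

theorem LAInvariant.discard (h : LAInvariant f c B P X Y) (hB : 0 ≤ B)
    (hf : SubmodularOn V f) (hPV : P ⊆ V) (heV : e ∈ V) (heP : e ∉ P)
    (hmX : B * marg f e X ≤ c e * f X) (hmY : B * marg f e Y ≤ c e * f Y) :
    LAInvariant f c B (insert e P) X Y where
  left_subset := h.left_subset.trans (subset_insert e P)
  right_subset := h.right_subset.trans (subset_insert e P)
  disjoint := h.disjoint
  left_bound := forall_subset_insert fun Q hQ heQ =>
    (h.left_bound Q hQ).grow_right hB hf (hQ.trans hPV) (h.left_subset.trans hPV) heV heQ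
      (fun he => heP (h.left_subset he)) le_rfl (by linarith)
  right_bound := forall_subset_insert fun Q hQ heQ =>
    (h.right_bound Q hQ).grow_right hB hf (hQ.trans hPV) (h.right_subset.trans hPV) heV heQ
      (fun he => heP (h.right_subset he)) le_rfl (by linarith)

theorem LAInvariant.step {st : List α × List α}
    (h : LAInvariant f c B P st.1.toFinset st.2.toFinset) (hB : 0 < B)
    (hf : SubmodularOn V f) (hnonneg : ∀ S ⊆ V, 0 ≤ f S) (hc : ∀ a ∈ V, 0 < c a)
    (hPV : P ⊆ V) (heV : e ∈ V) (heP : e ∉ P) :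
    LAInvariant f c B (insert e P) (laStep f c B st e).1.toFinset
      (laStep f c B st e).2.toFinset := by
  have hX := hnonneg _ (h.left_subset.trans hPV)
  have hY := hnonneg _ (h.right_subset.trans hPV)
  have hce := hc e heV
  have hc' : ∀ a ∈ V, 0 ≤ c a := fun a ha => (hc a ha).le
  simp only [laStep]
  split_ifs with hselX hokY
  · simpa using h.insert_left hB.le hf hc' hPV heV heP
      (marg_nonneg_of_threshold hB hce hX hselX.1)
      (mul_marg_le_of_preferred hB hce hX hY hselX.1 hselX.2)
  · have hpref :=
      (le_total (marg f e st.1.toFinset / c e) (marg f e st.2.toFinset / c e)).imp_right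
        fun hle hokX => hselX ⟨hokX, Or.inl hle⟩
    simpa using (h.symm.insert_left hB.le hf hc' hPV heV heP
      (marg_nonneg_of_threshold hB hce hY hokY)
      (mul_marg_le_of_preferred hB hce hY hX hokY hpref)).symm
  · exact h.discard hB.le hf hPV heV heP
      (mul_marg_le_of_not_threshold hB hce fun hokX => hselX ⟨hokX, Or.inr hokY⟩)
      (mul_marg_le_of_not_threshold hB hce hokY)

theorem laRun_invariant (hB : 0 < B) (hf : SubmodularOn V f) (hnonneg : ∀ S ⊆ V, 0 ≤ f S)
    (hf0 : f ∅ = 0) (hc : ∀ a ∈ V, 0 < c a) {l : List α} (hl : l.Nodup)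
    (hlV : l.toFinset ⊆ V) :
    LAInvariant f c B l.toFinset (laRun f c B l).1.toFinset (laRun f c B l).2.toFinset := by
  induction l using List.reverseRecOn with
  | nil => exact LAInvariant.empty hf0
  | append_singleton l e ih =>
    have hl' := List.nodup_cons.mp (List.nodup_append_comm.mp hl)
    have hsplit : (l ++ [e]).toFinset = insert e l.toFinset := by ext; simp
    rw [hsplit, insert_subset_iff] at hlV
    rw [hsplit, laRun, List.foldl_append, List.foldl_cons, List.foldl_nil]
    exact (ih hl'.2 hlV.2).step hB hf hnonneg hc hlV.2 hlV.1 (by simpa using hl'.1)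

end LAInvariant

theorem la_main_loop_bound_general {α : Type*} [DecidableEq α]
    (V : Finset α) (f : Finset α → ℝ) (c : α → ℝ) (B : ℝ) (hB : 0 < B)
    (hnonneg : ∀ S, S ⊆ V → 0 ≤ f S) (hnorm : f ∅ = 0)
    (hsub : ∀ A B' : Finset α, A ⊆ B' → B' ⊆ V → ∀ e ∈ V, e ∉ B' →
      f (insert e B') - f B' ≤ f (insert e A) - f A)
    (hc : ∀ e ∈ V, 0 < c e ∧ c e ≤ B)
    -- the fixed scanning order of `V1 = {e ∈ V : c(e) ≤ B/2}`
    (l1 : List α) (hl1d : l1.Nodup)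
    (hl1V : l1.toFinset = V.filter (fun e => c e ≤ B / 2))
    -- an optimal solution of the problem restricted to `V1`
    (O1 : Finset α) (hO1sub : O1 ⊆ V.filter (fun e => c e ≤ B / 2))
    (hO1c : cost c O1 ≤ B) :
    Disjoint (laRun f c B l1).1.toFinset (laRun f c B l1).2.toFinset ∧
      f O1 ≤ 3 * (f (laRun f c B l1).1.toFinset + f (laRun f c B l1).2.toFinset) := by
  have hf : SubmodularOn V f := hsub
  have hl1V' : l1.toFinset ⊆ V := hl1V ▸ filter_subset _ V
  have hO1l1 : O1 ⊆ l1.toFinset := hl1V ▸ hO1sub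
  have hO1V : O1 ⊆ V := hO1l1.trans hl1V'
  have hinv := laRun_invariant hB hf hnonneg hnorm (fun e he => (hc e he).1) hl1d hl1V'
  have hcost (Z : Finset α) : cost c (O1 \ Z) ≤ B :=
    (sum_le_sum_of_subset_of_nonneg sdiff_subset fun e he _ => (hc e (hO1V he)).1.le).trans hO1c
  have hXV := hinv.left_subset.trans hl1V'
  have hYV := hinv.right_subset.trans hl1V'
  have hOX := (hinv.left_bound O1 hO1l1).le_two_mul_add hB (hnonneg _ hXV) (hcost _)
  have hOY := (hinv.right_bound O1 hO1l1).le_two_mul_add hB (hnonneg _ hYV) (hcost _)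
  have hsplit := hf.le_union_add_union hnonneg hO1V hXV hYV hinv.disjoint
  exact ⟨hinv.disjoint, by linarith⟩

/-- At the end of the main loop of algorithm `LA`, the constructed sets
`X` and `Y` are disjoint and satisfy `f(O1) ≤ 3 (f(X) + f(Y))`, where `O1` is an optimal
solution of the problem restricted to `V1 = {e ∈ V : c(e) ≤ B/2}`. -/
theorem la_main_loop_bound {α : Type*} [DecidableEq α]
    (V : Finset α) (f : Finset α → ℝ) (c : α → ℝ) (B : ℝ) (hB : 0 < B)
    (hnonneg : ∀ S, S ⊆ V → 0 ≤ f S) (hnorm : f ∅ = 0)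
    (hsub : ∀ A B' : Finset α, A ⊆ B' → B' ⊆ V → ∀ e ∈ V, e ∉ B' →
      f (insert e B') - f B' ≤ f (insert e A) - f A)
    (hc : ∀ e ∈ V, 0 < c e ∧ c e ≤ B)
    -- the fixed scanning order of `V1 = {e ∈ V : c(e) ≤ B/2}`
    (l1 : List α) (hl1d : l1.Nodup)
    (hl1V : l1.toFinset = V.filter (fun e => c e ≤ B / 2))
    -- an optimal solution of the problem restricted to `V1`
    (O1 : Finset α) (hO1sub : O1 ⊆ V.filter (fun e => c e ≤ B / 2))
    (hO1c : cost c O1 ≤ B)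
    (hO1opt : ∀ S ⊆ V.filter (fun e => c e ≤ B / 2), cost c S ≤ B → f S ≤ f O1) :
    Disjoint (laRun f c B l1).1.toFinset (laRun f c B l1).2.toFinset ∧
      f O1 ≤ 3 * (f (laRun f c B l1).1.toFinset + f (laRun f c B l1).2.toFinset) :=
  la_main_loop_bound_general V f c B hB hnonneg hnorm hsub hc l1 hl1d hl1V O1 hO1sub hO1c
end

section
/- Consider the end of phase 1 of algorithm RLA, with candidate sequence U = {u_1, …, u_j} and random nested solutions ∅ = S_0 ⊆ S_1 ⊆ … ⊆ S_j, and let O be an optimal solution with r = argmax_{o∈O} c(o). For u_i ∈ U define τ(u_i) = i and S^{<u_i} = S_{i−1}, and τ(e) = +∞ for e ∈ V \ U; define O_{≤i} = {e ∈ O : τ(e) ≤ i} and O_{>i} = {e ∈ O : τ(e) > i}; define the indicator X_e = 1 if e ∈ O_{≤i} \ S_i or e ∈ S_i \ O, and X_e = 0 otherwise; define Y_e = 1 if e ∈ O_{≤i} \ (S_i ∪ {r}) or e ∈ S_i \ (O \ {r}), and Y_e = 0 otherwise. Then: (a) for any index i, E[f(S_i)] = E[ Σ_{e∈V} X_e ·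 f(e | S^{<e}) ]; and (b) for any index i such that c(S_i) ≤ B − c(r), E[f(S_i)] = E[ Σ_{e∈V} Y_e · f(e | S^{<e}) ]. -/
open scoped BigOperators Classical

/-- The longest prefix of a list whose total cost is at most the given budget
(costs being positive, this is the prefix of maximal length fitting in the budget). -/
noncomputable def takeCost {α : Type*} (c : α → ℝ) : ℝ → List α → List α
  | _, [] => []
  | b, a :: t => if c a ≤ b then a :: takeCost c (b - c a) t else []

/-- The scan of algorithm `LAR`: starting from `S = ∅`, scan the given list once, adding
the current element `e` to `S` whenever `f(e|S)/c(e) ≥ α f(S)/B`. -/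
noncomputable def larScan {α : Type*} [DecidableEq α] (f : Finset α → ℝ) (c : α → ℝ)
    (B a : ℝ) (L : List α) : List α :=
  L.foldl (fun S e =>
    if a * f S.toFinset / B ≤ marg f e S.toFinset / c e then S ++ [e] else S) []

/-- The output of algorithm `LAR` given the random sample `R ⊆ V1` (the realization of
`V_p`): scan the elements of `R` in the fixed order given by `l1`, take `S'` to be the
largest number of most-recently-added elements of `S` of total cost at most `B`, and
return the better of `S'` and `{emax}`. -/
noncomputable def larOut {α : Type*} [DecidableEq α] (f : Finset α → ℝ) (c : α → ℝ)
    (B a : ℝ) (l1 : List α) (R : Finset α) (emax : α) : Finset α :=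
  let S' := (takeCost c B (larScan f c B a (l1.filter (fun e => e ∈ R))).reverse).toFinset
  if f S' ≤ f {emax} then {emax} else S'

/-- One step of a pass of phase 1 of algorithm `RLA` at threshold `θ`.  The state `run`
is the list of candidates `u_1, u_2, …` recorded so far (oldest first), each paired with
the outcome of its fair coin (`true` = it was added to the current solution).  An element
`e` not yet recorded whose density gain w.r.t. the current solution `S_j` is at least `θ`
and which fits the budget is recorded as the next candidate, consuming the next coin of
the coin sequence `ω`. -/
noncomputable def rlaStep {α : Type*} [DecidableEq α] (f : Finset α → ℝ) (c : α → ℝ)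
    (B θ : ℝ) (ω : ℕ → Bool) (run : List (α × Bool)) (e : α) : List (α × Bool) :=
  if e ∈ run.map Prod.fst then run else
  let Sj := ((run.filter (fun q => q.2)).map Prod.fst).toFinset
  if θ ≤ marg f e Sj / c e ∧ cost c Sj + c e ≤ B then run ++ [(e, ω run.length)]
  else run

/-- Phase 1 of algorithm `RLA`: perform `N` passes over the ground set (in the fixed
order `l`); pass number `t` uses the threshold `(1 − ε')^t · θ0`. -/
noncomputable def rlaPhase1 {α : Type*} [DecidableEq α] (f : Finset α → ℝ) (c : α → ℝ)
    (B θ0 ε' : ℝ) (N : ℕ) (ω : ℕ → Bool) (l : List α) : List (α × Bool) :=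
  (List.range N).foldl (fun run t => l.foldl (rlaStep f c B ((1 - ε') ^ t * θ0) ω) run)
    []

/-- The list of elements accepted (coin `true`) in a run, in order of insertion. -/
def accList {α : Type*} (run : List (α × Bool)) : List α :=
  (run.filter (fun q => q.2)).map Prod.fst

/-- `Sset run i` is the solution `S_i`: the set of elements accepted among the first `i`
candidates. -/
noncomputable def Sset {α : Type*} [DecidableEq α] (run : List (α × Bool)) (i : ℕ) :
    Finset α := (accList (run.take i)).toFinset

/-- `Sbefore run e = S^{<e}`: the solution just before the candidate `e = u_i` was
considered, i.e. `S_{i−1}`. -/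
noncomputable def Sbefore {α : Type*} [DecidableEq α] (run : List (α × Bool)) (e : α) :
    Finset α := Sset run (List.idxOf e (run.map Prod.fst))

/-- The indicator `X_e` (as a real number): `X_e = 1` iff `e ∈ O_{≤i} \ S_i` or
`e ∈ S_i \ O`, where `O_{≤i} = {e ∈ O : τ(e) ≤ i}`. -/
noncomputable def xind {α : Type*} [DecidableEq α] (O : Finset α)
    (run : List (α × Bool)) (i : ℕ) (e : α) : ℝ :=
  if (e ∈ O ∧ e ∈ ((run.take i).map Prod.fst).toFinset ∧ e ∉ Sset run i) ∨
     (e ∈ Sset run i ∧ e ∉ O) then 1 else 0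

/-- The indicator `Y_e` (as a real number): `Y_e = 1` iff `e ∈ O_{≤i} \ (S_i ∪ {r})` or
`e ∈ S_i \ (O \ {r})`. -/
noncomputable def yind {α : Type*} [DecidableEq α] (O : Finset α) (r : α)
    (run : List (α × Bool)) (i : ℕ) (e : α) : ℝ :=
  if (e ∈ O ∧ e ∈ ((run.take i).map Prod.fst).toFinset ∧ e ∉ Sset run i ∧ e ≠ r) ∨
     (e ∈ Sset run i ∧ ¬ (e ∈ O ∧ e ≠ r)) then 1 else 0

/-- A finite tuple of `M` fair-coin outcomes, viewed as an infinite coin sequence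
(coins beyond the `M`-th are irrelevant: at most `M` coins are ever consumed). -/
def coinSeq {M : ℕ} (v : Fin M → Bool) : ℕ → Bool :=
  fun k => if h : k < M then v ⟨k, h⟩ else false

/-!
Telescoping writes `f(S_i)` as the sum of the marginal gains `f(e | S^{<e})` over `e ∈ S_i`.
The coin of a candidate `e` is tossed only after `e` has been chosen, so flipping that single
coin changes neither the candidates preceding `e` nor `S^{<e}`, nor whether `e ∈ U_{≤ i}`, but
exchanges the events `e ∈ S_i` and `e ∈ U_{≤ i} \ S_i`. Flipping is a measure-preserving
involution of the coin space, so for `e ∈ O` both events contribute the same expected gain,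
which gives (a); (b) is (a) for `O \ {r}`.
-/

open Finset

section Runs

variable {α : Type*} [DecidableEq α]

/-- The candidate set `U_{≤ i} = {u_1, …, u_i}`. -/
def Uset (run : List (α × Bool)) (i : ℕ) : Finset α :=
  ((run.take i).map Prod.fst).toFinset

theorem mem_Sset_iff {run : List (α × Bool)} {i : ℕ} {e : α} :
    e ∈ Sset run i ↔ (e, true) ∈ run.take i := by
  simp [Sset, accList]

theorem Sset_subset_Uset (run : List (α × Bool)) (i : ℕ) : Sset run i ⊆ Uset run i := by
  intro e he
  rw [mem_Sset_iff] at he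
  simpa [Uset, ← List.map_take] using List.mem_map_of_mem (f := Prod.fst) he

theorem Sset_append_length (pre rest : List (α × Bool)) :
    Sset (pre ++ rest) pre.length = (accList pre).toFinset := by
  simp [Sset]

theorem Sset_append_cons_length_succ (pre rest : List (α × Bool)) (a : α) (b : Bool) :
    Sset (pre ++ (a, b) :: rest) (pre.length + 1) =
      if b then insert a (Sset (pre ++ (a, b) :: rest) pre.length)
      else Sset (pre ++ (a, b) :: rest) pre.length := by
  cases b <;> simp [Sset, accList, List.take_append, List.take_of_length_le]

section Nodup

variable {pre rest : List (α × Bool)} {a : α} {b : Bool}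

theorem idxOf_fst_append_cons (hnd : ((pre ++ (a, b) :: rest).map Prod.fst).Nodup) :
    ((pre ++ (a, b) :: rest).map Prod.fst).idxOf a = pre.length := by
  have ha : a ∉ pre.map Prod.fst := by
    simp only [List.map_append, List.map_cons, List.nodup_append, List.nodup_cons] at hnd
    exact fun h => hnd.2.2 a h a List.mem_cons_self rfl
  simp [List.idxOf_append_of_notMem ha]

theorem Sbefore_append_cons (hnd : ((pre ++ (a, b) :: rest).map Prod.fst).Nodup) :
    Sbefore (pre ++ (a, b) :: rest) a = Sset (pre ++ (a, b) :: rest) pre.length := by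
  rw [Sbefore, idxOf_fst_append_cons hnd]

theorem mem_Uset_append_cons (hnd : ((pre ++ (a, b) :: rest).map Prod.fst).Nodup) {i : ℕ} :
    a ∈ Uset (pre ++ (a, b) :: rest) i ↔ pre.length < i := by
  rw [Uset, List.mem_toFinset, List.map_take, List.mem_take_iff_idxOf_lt (by simp),
    idxOf_fst_append_cons hnd]

theorem mem_Sset_append_cons (hnd : ((pre ++ (a, b) :: rest).map Prod.fst).Nodup) {i : ℕ} :
    a ∈ Sset (pre ++ (a, b) :: rest) i ↔ pre.length < i ∧ b = true := by
  have hmem : (a, b) ∈ pre ++ (a, b) :: rest := by simp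
  constructor
  · intro h
    refine ⟨(mem_Uset_append_cons hnd).1 (Sset_subset_Uset _ _ h), ?_⟩
    rw [mem_Sset_iff] at h
    exact (congrArg Prod.snd
      (List.inj_on_of_nodup_map hnd (List.mem_of_mem_take h) hmem rfl)).symm
  · rintro ⟨hi, rfl⟩
    obtain ⟨j, rfl⟩ := Nat.exists_eq_add_of_lt hi
    rw [mem_Sset_iff, List.take_append, List.mem_append, show pre.length + j + 1 - pre.length =
      j + 1 by omega]
    simp

end Nodup

theorem f_Sset_eq_sum_marg (f : Finset α → ℝ) (hnorm : f ∅ = 0) {run : List (α × Bool)}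
    (hnd : (run.map Prod.fst).Nodup) (i : ℕ) :
    f (Sset run i) = ∑ e ∈ Sset run i, marg f e (Sbefore run e) := by
  induction i with
  | zero => simp [Sset, accList, hnorm]
  | succ i ih =>
    rcases lt_or_ge i run.length with hi | hi
    · obtain ⟨pre, a, b, rest, rfl, rfl⟩ :
          ∃ pre a b rest, run = pre ++ (a, b) :: rest ∧ pre.length = i :=
        ⟨run.take i, run[i].1, run[i].2, run.drop (i + 1),
          by simp [← List.drop_eq_getElem_cons hi], by simp [hi.le]⟩
      rw [Sset_append_cons_length_succ]
      cases b
      · exact ih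
      · have ha : a ∉ Sset (pre ++ (a, true) :: rest) pre.length := by
          simp [mem_Sset_append_cons hnd]
        rw [if_pos rfl, sum_insert ha, ← ih, Sbefore_append_cons hnd, marg]
        ring
    · have hS : Sset run (i + 1) = Sset run i := by
        simp only [Sset, List.take_of_length_le hi, List.take_of_length_le (hi.trans i.le_succ)]
      rwa [hS]

end Runs

section Indicators

variable {α : Type*} [DecidableEq α] (run : List (α × Bool)) (i : ℕ) {O : Finset α} {e : α}

theorem xind_mul_of_mem (he : e ∈ O) (x : ℝ) :
    xind O run i e * x = if e ∈ Uset run i ∧ e ∉ Sset run i then x else 0 := by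
  by_cases h : e ∈ Uset run i ∧ e ∉ Sset run i <;> simp_all [xind, Uset]

theorem xind_mul_of_notMem (he : e ∉ O) (x : ℝ) :
    xind O run i e * x = if e ∈ Sset run i then x else 0 := by
  by_cases h : e ∈ Sset run i <;> simp [xind, he, h]

theorem yind_eq_xind_erase (O : Finset α) (r e : α) :
    yind O r run i e = xind (O.erase r) run i e := by
  simp only [yind, xind, mem_erase]
  exact if_congr (by tauto) rfl rfl

end Indicators

def flipAt {M : ℕ} (k : ℕ) (v : Fin M → Bool) : Fin M → Bool :=
  fun j => if (j : ℕ) = k then !v j else v j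

section Flip

variable {M k : ℕ} (v : Fin M → Bool)

theorem flipAt_flipAt : flipAt k (flipAt k v) = v := by
  funext j
  by_cases h : (j : ℕ) = k <;> simp [flipAt, h]

theorem coinSeq_flipAt_of_ne {j : ℕ} (h : j ≠ k) : coinSeq (flipAt k v) j = coinSeq v j := by
  simp [coinSeq, flipAt, h]

theorem coinSeq_flipAt_self (hk : k < M) : coinSeq (flipAt k v) k = !coinSeq v k := by
  simp [coinSeq, flipAt, hk]

end Flip

section CoinDriven

variable {α : Type*} [DecidableEq α]

/-- How the runs driven by coin sequences `ω` and `ω'` that agree below `k` are related. -/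
def CoupledAt (k : ℕ) (ω ω' : ℕ → Bool) (run run' : List (α × Bool)) : Prop :=
  (run = run' ∧ run.length ≤ k) ∨
    ∃ pre a rest rest', pre.length = k ∧ run = pre ++ (a, ω k) :: rest ∧
      run' = pre ++ (a, ω' k) :: rest'

/-- A random candidate process where coin `k` is tossed only once candidate `k` is chosen. -/
structure CoinDriven (run : (ℕ → Bool) → List (α × Bool)) (M : ℕ) : Prop where
  nodup : ∀ ω, ((run ω).map Prod.fst).Nodup
  length_le : ∀ ω, (run ω).length ≤ M
  coupledAt : ∀ k ω ω', (∀ j < k, ω j = ω' j) → CoupledAt k ω ω' (run ω) (run ω')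

variable {run : (ℕ → Bool) → List (α × Bool)} {M : ℕ}

theorem CoinDriven.flipAt_idxOf_swaps_Sset (hrun : CoinDriven run M) {v : Fin M → Bool} {e : α}
    {i k : ℕ}
    (he : e ∈ Uset (run (coinSeq v)) i) (hk : ((run (coinSeq v)).map Prod.fst).idxOf e = k) :
    ((run (coinSeq (flipAt k v))).map Prod.fst).idxOf e = k ∧
      e ∈ Uset (run (coinSeq (flipAt k v))) i ∧
      Sbefore (run (coinSeq (flipAt k v))) e = Sbefore (run (coinSeq v)) e ∧
      (e ∈ Sset (run (coinSeq (flipAt k v))) i ↔ e ∉ Sset (run (coinSeq v)) i) := by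
  have hkl : k < (run (coinSeq v)).length := by
    have : e ∈ (run (coinSeq v)).map Prod.fst :=
      List.mem_of_mem_take (by simpa [Uset, List.map_take] using he)
    simpa [← hk] using List.idxOf_lt_length_iff.2 this
  have hkM : k < M := hkl.trans_le (hrun.length_le _)
  have hnd := hrun.nodup (coinSeq v)
  have hnd' := hrun.nodup (coinSeq (flipAt k v))
  rcases hrun.coupledAt k _ _ (fun j hj => (coinSeq_flipAt_of_ne v hj.ne).symm) with
    ⟨-, hlen⟩ | ⟨pre, a, rest, rest', rfl, h, h'⟩
  · omega
  rw [h] at he hk hnd ⊢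
  rw [h'] at hnd' ⊢
  obtain rfl : a = e :=
    (List.idxOf_inj (by simp)).1 ((idxOf_fst_append_cons hnd).trans hk.symm)
  rw [coinSeq_flipAt_self v hkM] at hnd' ⊢
  have hi := (mem_Uset_append_cons hnd).1 he
  refine ⟨idxOf_fst_append_cons hnd', (mem_Uset_append_cons hnd').2 hi, ?_, ?_⟩
  · rw [Sbefore_append_cons hnd, Sbefore_append_cons hnd', Sset_append_length,
      Sset_append_length]
  · rw [mem_Sset_append_cons hnd, mem_Sset_append_cons hnd']
    cases coinSeq v pre.length <;> simp [hi]

theorem CoinDriven.sum_accepted_eq_sum_rejected (hrun : CoinDriven run M) (e : α) (i : ℕ)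
    (G : Finset α → ℝ) :
    ∑ v : Fin M → Bool,
        (if e ∈ Sset (run (coinSeq v)) i then G (Sbefore (run (coinSeq v)) e) else 0) =
      ∑ v : Fin M → Bool,
        (if e ∈ Uset (run (coinSeq v)) i ∧ e ∉ Sset (run (coinSeq v)) i then
          G (Sbefore (run (coinSeq v)) e) else 0) := by
  let K : (Fin M → Bool) → ℕ := fun v => ((run (coinSeq v)).map Prod.fst).idxOf e
  let φ : (Fin M → Bool) → Fin M → Bool := fun v =>
    if e ∈ Uset (run (coinSeq v)) i then flipAt (K v) v else v
  have hφ : Function.Involutive φ := by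
    intro v
    by_cases he : e ∈ Uset (run (coinSeq v)) i
    · obtain ⟨hK, he', -, -⟩ := hrun.flipAt_idxOf_swaps_Sset he rfl
      simp only [φ, if_pos he, if_pos he', K, hK, flipAt_flipAt]
    · simp only [φ, if_neg he]
  refine (Fintype.sum_congr _ _ fun v => ?_).trans (Equiv.sum_comp (hφ.toPerm φ) _)
  by_cases he : e ∈ Uset (run (coinSeq v)) i
  · obtain ⟨-, he', hbefore, hmem⟩ := hrun.flipAt_idxOf_swaps_Sset he (k := K v) rfl
    simp only [Function.Involutive.coe_toPerm, φ, if_pos he, he', hbefore, hmem, not_not,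
      true_and]
  · have hS : e ∉ Sset (run (coinSeq v)) i := fun h => he (Sset_subset_Uset _ _ h)
    simp [φ, he, hS]

theorem CoinDriven.sum_f_Sset_eq_sum_xind (hrun : CoinDriven run M) (f : Finset α → ℝ)
    (hnorm : f ∅ = 0) {V : Finset α} (hV : ∀ ω, ∀ q ∈ run ω, q.1 ∈ V) (O : Finset α)
    (i : ℕ) :
    ∑ v : Fin M → Bool, f (Sset (run (coinSeq v)) i) =
      ∑ v : Fin M → Bool, ∑ e ∈ V,
        xind O (run (coinSeq v)) i e * marg f e (Sbefore (run (coinSeq v)) e) := by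
  have hSV : ∀ ω, Sset (run ω) i ⊆ V := fun ω e he =>
    hV ω (e, true) (List.mem_of_mem_take (mem_Sset_iff.1 he))
  calc ∑ v : Fin M → Bool, f (Sset (run (coinSeq v)) i)
      = ∑ v : Fin M → Bool, ∑ e ∈ V, if e ∈ Sset (run (coinSeq v)) i then
          marg f e (Sbefore (run (coinSeq v)) e) else 0 := by
        refine Fintype.sum_congr _ _ fun v => ?_
        rw [f_Sset_eq_sum_marg f hnorm (hrun.nodup _), sum_ite_mem,
          inter_eq_right.2 (hSV _)]
    _ = ∑ e ∈ V, ∑ v : Fin M → Bool, if e ∈ Sset (run (coinSeq v)) i then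
          marg f e (Sbefore (run (coinSeq v)) e) else 0 := sum_comm
    _ = ∑ e ∈ V, ∑ v : Fin M → Bool,
          xind O (run (coinSeq v)) i e * marg f e (Sbefore (run (coinSeq v)) e) := by
        refine sum_congr rfl fun e _ => ?_
        by_cases heO : e ∈ O
        · simp only [xind_mul_of_mem _ _ heO]
          exact hrun.sum_accepted_eq_sum_rejected e i (marg f e)
        · simp only [xind_mul_of_notMem _ _ heO]
    _ = _ := sum_comm

end CoinDriven

section RLA

variable {α : Type*} [DecidableEq α] (f : Finset α → ℝ) (c : α → ℝ) (B : ℝ)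

theorem rlaStep_eq_self_or (θ : ℝ) (run : List (α × Bool)) (e : α) :
    (∀ ω, rlaStep f c B θ ω run e = run) ∨
      (e ∉ run.map Prod.fst ∧
        ∀ ω, rlaStep f c B θ ω run e = run ++ [(e, ω run.length)]) := by
  by_cases h₁ : e ∈ run.map Prod.fst
  · exact Or.inl fun _ => by simp [rlaStep, h₁]
  by_cases h₂ : θ ≤ marg f e ((run.filter (·.2)).map Prod.fst).toFinset / c e ∧
      cost c ((run.filter (·.2)).map Prod.fst).toFinset + c e ≤ B
  · exact Or.inr ⟨h₁, fun _ => by simp [rlaStep, h₁, h₂]⟩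
  · exact Or.inl fun _ => by simp [rlaStep, h₁, h₂]

theorem exists_rlaStep_eq_append (θ : ℝ) (ω : ℕ → Bool) (run : List (α × Bool)) (e : α) :
    ∃ ext, rlaStep f c B θ ω run e = run ++ ext := by
  rcases rlaStep_eq_self_or f c B θ run e with h | ⟨-, h⟩
  exacts [⟨[], by simp [h]⟩, ⟨_, h ω⟩]

theorem CoupledAt.rlaStep {k : ℕ} {ω ω' : ℕ → Bool} (hω : ∀ j < k, ω j = ω' j)
    {run run' : List (α × Bool)} (h : CoupledAt k ω ω' run run') (θ : ℝ) (e : α) :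
    CoupledAt k ω ω' (rlaStep f c B θ ω run e) (rlaStep f c B θ ω' run' e) := by
  rcases h with ⟨rfl, hlen⟩ | ⟨pre, a, rest, rest', hpre, rfl, rfl⟩
  · rcases rlaStep_eq_self_or f c B θ run e with h | ⟨-, h⟩
    · exact Or.inl ⟨by rw [h, h], by rwa [h]⟩
    rw [h, h]
    rcases hlen.lt_or_eq with hlt | rfl
    · exact Or.inl ⟨by rw [hω _ hlt], by simpa using hlt⟩
    · exact Or.inr ⟨run, e, [], [], rfl, rfl, rfl⟩
  · obtain ⟨ext, hext⟩ := exists_rlaStep_eq_append f c B θ ω (pre ++ (a, ω k) :: rest) e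
    obtain ⟨ext', hext'⟩ := exists_rlaStep_eq_append f c B θ ω' (pre ++ (a, ω' k) :: rest') e
    exact Or.inr ⟨pre, a, rest ++ ext, rest' ++ ext', hpre, by simp [hext], by simp [hext']⟩

variable (θ0 ε' : ℝ) (n : ℕ) (l : List α)

theorem rlaPhase1_rel {r : List (α × Bool) → List (α × Bool) → Prop} {ω ω' : ℕ → Bool}
    (h₀ : r [] [])
    (hstep : ∀ θ run run', ∀ e ∈ l, r run run' →
      r (rlaStep f c B θ ω run e) (rlaStep f c B θ ω' run' e)) :
    r (rlaPhase1 f c B θ0 ε' n ω l) (rlaPhase1 f c B θ0 ε' n ω' l) :=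
  List.foldl_rel h₀ fun _ _ _ _ h => List.foldl_rel h fun e he _ _ => hstep _ _ _ e he

theorem rlaPhase1_nodup (ω : ℕ → Bool) :
    ((rlaPhase1 f c B θ0 ε' n ω l).map Prod.fst).Nodup := by
  refine rlaPhase1_rel f c B θ0 ε' n l (r := fun run _ => (run.map Prod.fst).Nodup)
    (ω' := ω) List.nodup_nil fun θ run _ e _ h => ?_
  rcases rlaStep_eq_self_or f c B θ run e with h' | ⟨he, h'⟩
  · rwa [h']
  · rw [h', List.map_append, List.nodup_append]
    exact ⟨h, List.nodup_singleton e, by simpa using fun a ha => ne_of_mem_of_not_mem ha he⟩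

theorem rlaPhase1_fst_mem (ω : ℕ → Bool) :
    ∀ q ∈ rlaPhase1 f c B θ0 ε' n ω l, q.1 ∈ l := by
  refine rlaPhase1_rel f c B θ0 ε' n l (r := fun run _ => ∀ q ∈ run, q.1 ∈ l)
    (ω' := ω) (by simp) fun θ run _ e he h => ?_
  rcases rlaStep_eq_self_or f c B θ run e with h' | ⟨-, h'⟩
  · rwa [h']
  · intro q hq
    rw [h', List.mem_append, List.mem_singleton] at hq
    rcases hq with hq | rfl
    exacts [h q hq, he]

theorem rlaPhase1_coinDriven :
    CoinDriven (fun ω => rlaPhase1 f c B θ0 ε' n ω l) l.length where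
  nodup := rlaPhase1_nodup f c B θ0 ε' n l
  length_le ω := by
    have hsub : (rlaPhase1 f c B θ0 ε' n ω l).map Prod.fst ⊆ l := by
      intro a ha
      obtain ⟨q, hq, rfl⟩ := List.mem_map.1 ha
      exact rlaPhase1_fst_mem f c B θ0 ε' n l ω q hq
    simpa using ((rlaPhase1_nodup f c B θ0 ε' n l ω).subperm hsub).length_le
  coupledAt k _ _ hω := rlaPhase1_rel f c B θ0 ε' n l (Or.inl ⟨rfl, k.zero_le⟩)
    fun θ _ _ e _ h => h.rlaStep f c B hω θ e

end RLA

theorem rla_phase1_expectation_general {α : Type*} [DecidableEq α]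
    (V : Finset α) (f : Finset α → ℝ) (c : α → ℝ) (B : ℝ)
    (hnorm : f ∅ = 0)
    (ε' : ℝ)
    -- fixed scanning orders of `V` and of `V1 = {e ∈ V : c(e) ≤ B/2}`
    (l : List α) (hlV : l.toFinset = V)
    (V1 : Finset α)
    -- the parameters of the subroutine `LAR`
    (p : ℝ)
    -- for each realization `R` of `V_p`, the value `Γ = f(S')` of the `LAR` output and
    -- the initial threshold `θ0 = 16.034·Γ/(4ε'B)` of phase 1
    (θ0 : Finset α → ℝ)
    -- `N R` is the number of passes of phase 1: pass `t` runs iff its threshold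
    -- `(1 − ε')^t · θ0` is still at least `Γ(1 − ε')/(4B)`
    (N : Finset α → ℕ)
    -- the number of available coins and the run of phase 1
    (M : ℕ) (hM : M = l.length)
    (Run : Finset α → (Fin M → Bool) → List (α × Bool))
    (hRun : ∀ R v, Run R v = rlaPhase1 f c B (θ0 R) ε' (N R) (coinSeq v) l)
    -- the expectation operator over the sample `R` (element-wise with probability `p`)
    -- and the `M` independent fair coins
    (Exp : (Finset α → (Fin M → Bool) → ℝ) → ℝ)
    (hExp : ∀ g : Finset α → (Fin M → Bool) → ℝ,
      Exp g = ∑ R ∈ V1.powerset, ∑ v : Fin M → Bool,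
        p ^ R.card * (1 - p) ^ (V1.card - R.card) * (1 / 2 : ℝ) ^ M * g R v)
    -- an optimal solution and its most expensive element `r`
    (O : Finset α)
    (r : α) :
    (∀ i : ℕ,
      Exp (fun R v => f (Sset (Run R v) i)) =
        Exp (fun R v => ∑ e ∈ V, xind O (Run R v) i e * marg f e (Sbefore (Run R v) e))) ∧
    (∀ i : ℕ,
      (∀ R ∈ V1.powerset, ∀ v : Fin M → Bool, cost c (Sset (Run R v) i) ≤ B - c r) →
      Exp (fun R v => f (Sset (Run R v) i)) =
        Exp (fun R v =>
          ∑ e ∈ V, yind O r (Run R v) i e * marg f e (Sbefore (Run R v) e))) := by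
  subst hM
  have key : ∀ (P : Finset α) (i : ℕ), Exp (fun R v => f (Sset (Run R v) i)) =
      Exp (fun R v => ∑ e ∈ V, xind P (Run R v) i e * marg f e (Sbefore (Run R v) e)) := by
    intro P i
    rw [hExp, hExp]
    refine sum_congr rfl fun R _ => ?_
    simp only [← mul_sum, hRun]
    congr 1
    refine (rlaPhase1_coinDriven f c B (θ0 R) ε' (N R) l).sum_f_Sset_eq_sum_xind f hnorm
      (fun ω q hq => ?_) P i
    simpa [← hlV] using rlaPhase1_fst_mem f c B (θ0 R) ε' (N R) l ω q hq
  refine ⟨key O, fun i _ => ?_⟩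
  simp only [yind_eq_xind_erase]
  exact key (O.erase r) i

/-- (Lemma on phase 1 of `RLA`.)  Consider the end of phase 1 of
algorithm `RLA`, with candidate sequence `U = {u_1, …, u_j}` and random nested solutions
`∅ = S_0 ⊆ S_1 ⊆ … ⊆ S_j`, and let `O` be an optimal solution with
`r = argmax_{o ∈ O} c(o)`.  Then (a) for any index `i`,
`E[f(S_i)] = E[Σ_{e ∈ V} X_e · f(e|S^{<e})]`, and (b) for any index `i` such that
`c(S_i) ≤ B − c(r)`, `E[f(S_i)] = E[Σ_{e ∈ V} Y_e · f(e|S^{<e})]`.  The expectation is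
over the random sample `V_p` of the subroutine `LAR` and the fair coins of phase 1. -/
theorem rla_phase1_expectation {α : Type*} [DecidableEq α]
    (V : Finset α) (f : Finset α → ℝ) (c : α → ℝ) (B : ℝ) (hB : 0 < B)
    (hnonneg : ∀ S, S ⊆ V → 0 ≤ f S) (hnorm : f ∅ = 0)
    (hsub : ∀ A B' : Finset α, A ⊆ B' → B' ⊆ V → ∀ e ∈ V, e ∉ B' →
      f (insert e B') - f B' ≤ f (insert e A) - f A)
    (hc : ∀ e ∈ V, 0 < c e ∧ c e ≤ B)
    (ε : ℝ) (hε0 : 0 < ε) (hε1 : ε < 1) (ε' : ℝ) (hε' : ε' = ε / 10)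
    -- fixed scanning orders of `V` and of `V1 = {e ∈ V : c(e) ≤ B/2}`
    (l : List α) (hld : l.Nodup) (hlV : l.toFinset = V)
    (V1 : Finset α) (hV1 : V1 = V.filter (fun e => c e ≤ B / 2))
    (l1 : List α) (hl1d : l1.Nodup) (hl1V : l1.toFinset = V1)
    -- the maximal singleton `e_max = argmax_{e ∈ V} f({e})`
    (emax : α) (hemaxV : emax ∈ V) (hemax : ∀ e ∈ V, f {e} ≤ f {emax})
    -- the parameters of the subroutine `LAR`
    (p a : ℝ) (hp : p = Real.sqrt 2 - 1) (ha : a = Real.sqrt (2 + 2 * Real.sqrt 2))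
    -- for each realization `R` of `V_p`, the value `Γ = f(S')` of the `LAR` output and
    -- the initial threshold `θ0 = 16.034·Γ/(4ε'B)` of phase 1
    (Γ θ0 : Finset α → ℝ)
    (hΓ : ∀ R : Finset α, Γ R = f (larOut f c B a l1 R emax))
    (hθ0 : ∀ R : Finset α, θ0 R = 16.034 * Γ R / (4 * ε' * B))
    -- `N R` is the number of passes of phase 1: pass `t` runs iff its threshold
    -- `(1 − ε')^t · θ0` is still at least `Γ(1 − ε')/(4B)`
    (N : Finset α → ℕ)
    (hN : ∀ R ∈ V1.powerset, ∀ t : ℕ,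
      (Γ R * (1 - ε') / (4 * B) ≤ (1 - ε') ^ t * θ0 R ↔ t < N R))
    -- the number of available coins and the run of phase 1
    (M : ℕ) (hM : M = l.length)
    (Run : Finset α → (Fin M → Bool) → List (α × Bool))
    (hRun : ∀ R v, Run R v = rlaPhase1 f c B (θ0 R) ε' (N R) (coinSeq v) l)
    -- the expectation operator over the sample `R` (element-wise with probability `p`)
    -- and the `M` independent fair coins
    (Exp : (Finset α → (Fin M → Bool) → ℝ) → ℝ)
    (hExp : ∀ g : Finset α → (Fin M → Bool) → ℝ,
      Exp g = ∑ R ∈ V1.powerset, ∑ v : Fin M → Bool,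
        p ^ R.card * (1 - p) ^ (V1.card - R.card) * (1 / 2 : ℝ) ^ M * g R v)
    -- an optimal solution and its most expensive element `r`
    (O : Finset α) (hO : O ⊆ V) (hOc : cost c O ≤ B)
    (hOopt : ∀ T, T ⊆ V → cost c T ≤ B → f T ≤ f O)
    (r : α) (hrO : r ∈ O) (hr : ∀ o ∈ O, c o ≤ c r) :
    (∀ i : ℕ,
      Exp (fun R v => f (Sset (Run R v) i)) =
        Exp (fun R v => ∑ e ∈ V, xind O (Run R v) i e * marg f e (Sbefore (Run R v) e))) ∧
    (∀ i : ℕ,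
      (∀ R ∈ V1.powerset, ∀ v : Fin M → Bool, cost c (Sset (Run R v) i) ≤ B - c r) →
      Exp (fun R v => f (Sset (Run R v) i)) =
        Exp (fun R v =>
          ∑ e ∈ V, yind O r (Run R v) i e * marg f e (Sbefore (Run R v) e))) :=
  rla_phase1_expectation_general V f c B hnorm ε' l hlV V1 p θ0 N M hM Run hRun Exp hExp O r
end
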